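/- For every u ∈ 𝒫 one has Φ(u) ≥ a(1/2 − 1/(qγ_q))|∇u|₂² + b(1/4 − 1/(qγ_q))|∇u|₂⁴. Since q > 14/3 implies qγ_q > 4, both coefficients are strictly positive; in particular Φ is coercive on 𝒫. -/

import Mathlib

open MeasureTheory Real Filter Topology
open scoped InnerProductSpace

noncomputable section

namespace KirchhoffChoquard

abbrev E3 := EuclideanSpace ℝ (Fin 3)

/-- Squared L²-norm of the gradient, `|∇u|₂²`. -/
def gradSq (u : E3 → ℝ) : ℝ := ∫ x : E3, ‖gradient u x‖ ^ 2

/-- `|u|_p^p`, the `p`-th power of the `Lᵖ`-norm. -/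
def lpPow (p : ℝ) (u : E3 → ℝ) : ℝ := ∫ x : E3, |u x| ^ p

/-- The normalisation constant `A_α` of the Riesz potential. -/
def Aalpha (α : ℝ) : ℝ :=
  Real.Gamma ((3 - α) / 2) / ((2 : ℝ) ^ α * Real.pi ^ ((3 : ℝ) / 2) * Real.Gamma (α / 2))

/-- The Riesz convolution `(I_α * |u|^{α+3})(x)`. -/
def rieszConv (α : ℝ) (u : E3 → ℝ) (x : E3) : ℝ :=
  ∫ y : E3, Aalpha α / ‖x - y‖ ^ (3 - α) * |u y| ^ (α + 3)

/-- The nonlocal Choquard term `𝒜(u)`. -/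
def calA (α : ℝ) (u : E3 → ℝ) : ℝ :=
  ∫ x : E3, rieszConv α u x * |u x| ^ (α + 3)

/-- `γ_q = 3(q-2)/(2q)`. -/
def gammaq (q : ℝ) : ℝ := 3 * (q - 2) / (2 * q)

/-- The energy functional `Φ`. -/
def Phi (a b μ q α : ℝ) (u : E3 → ℝ) : ℝ :=
  a / 2 * gradSq u + b / 4 * (gradSq u) ^ 2 - μ / q * lpPow q u
    - calA α u / (2 * (α + 3))

/-- The Pohozaev functional `P`. -/
def Poh (a b μ q α : ℝ) (u : E3 → ℝ) : ℝ :=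
  a * gradSq u + b * (gradSq u) ^ 2 - μ * gammaq q * lpPow q u - calA α u

/-- Membership in `H¹(ℝ³)`. -/
def MemH1 (u : E3 → ℝ) : Prop :=
  MemLp u 2 (volume : Measure E3) ∧ MemLp (gradient u) 2 (volume : Measure E3)

/-- Radial functions. -/
def Radial (u : E3 → ℝ) : Prop := ∀ x y : E3, ‖x‖ = ‖y‖ → u x = u y

/-- The mass constraint sphere `S_ρ`. -/
def Sρ (ρ : ℝ) (u : E3 → ℝ) : Prop := MemH1 u ∧ lpPow 2 u = ρ ^ 2

/-- The Pohozaev set `𝒫 = {u ∈ S_ρ : P(u) = 0}`. -/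
def PohSet (a b μ ρ q α : ℝ) (u : E3 → ℝ) : Prop :=
  Sρ ρ u ∧ Poh a b μ q α u = 0

/-- The `L²`-norm preserving scaling `(t ⋆ u)(x) = t^{3/2} u(t x)`. -/
def scale (t : ℝ) (u : E3 → ℝ) : E3 → ℝ := fun x => t ^ ((3 : ℝ) / 2) * u (t • x)

/-- The fiber map `E_u(t) = Φ(t ⋆ u)`. -/
def Efib (a b μ q α : ℝ) (u : E3 → ℝ) (t : ℝ) : ℝ := Phi a b μ q α (scale t u)

/-- The derivative `Φ'(v)` applied to `h`. -/
def PhiDeriv (a b μ q α : ℝ) (v h : E3 → ℝ) : ℝ :=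
  (a + b * gradSq v) * (∫ x : E3, ⟪gradient v x, gradient h x⟫_ℝ)
    - μ * ∫ x : E3, |v x| ^ (q - 2) * v x * h x
    - ∫ x : E3, rieszConv α v x * |v x| ^ (α + 1) * v x * h x

/-- The derivative `P'(v)` applied to `h`. -/
def PohDeriv (a b μ q α : ℝ) (v h : E3 → ℝ) : ℝ :=
  (2 * a + 4 * b * gradSq v) * (∫ x : E3, ⟪gradient v x, gradient h x⟫_ℝ)
    - μ * q * gammaq q * ∫ x : E3, |v x| ^ (q - 2) * v x * h x
    - 2 * (α + 3) * ∫ x : E3, rieszConv α v x * |v x| ^ (α + 1) * v x * h x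

/-- `(λ, u)` weakly solves the Kirchhoff–Choquard equation. -/
def WeakSolution (a b μ q α lam : ℝ) (u : E3 → ℝ) : Prop :=
  MemH1 u ∧ ∀ φ : E3 → ℝ, MemH1 φ →
    (a + b * gradSq u) * (∫ x : E3, ⟪gradient u x, gradient φ x⟫_ℝ)
        - lam * ∫ x : E3, u x * φ x
      = μ * (∫ x : E3, |u x| ^ (q - 2) * u x * φ x)
        + ∫ x : E3, rieszConv α u x * |u x| ^ (α + 1) * u x * φ x

/-- `m_ρ = inf {Φ(u) : u ∈ 𝒫}`. -/
def mRho (a b μ ρ q α : ℝ) : ℝ :=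
  sInf {c : ℝ | ∃ u : E3 → ℝ, PohSet a b μ ρ q α u ∧ Phi a b μ q α u = c}

/-- `m_{ρ,r} = inf {Φ(u) : u ∈ 𝒫_r}`. -/
def mRhoR (a b μ ρ q α : ℝ) : ℝ :=
  sInf {c : ℝ | ∃ u : E3 → ℝ, PohSet a b μ ρ q α u ∧ Radial u ∧ Phi a b μ q α u = c}

/-- Squared `H¹` distance. -/
def H1distSq (u v : E3 → ℝ) : ℝ :=
  lpPow 2 (fun x => u x - v x) + gradSq (fun x => u x - v x)

/-- Continuity of a path `[0,1] → H¹(ℝ³)` in the `H¹` topology. -/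
def H1ContOn (η : ℝ → E3 → ℝ) : Prop :=
  ∀ s ∈ Set.Icc (0 : ℝ) 1, ∀ ε > (0 : ℝ), ∃ δ > (0 : ℝ),
    ∀ s' ∈ Set.Icc (0 : ℝ) 1, |s' - s| < δ → H1distSq (η s') (η s) < ε

/-- The admissible mountain-pass paths `Γ_ρ` (with parameter `k`). -/
def InGamma (a b μ ρ q α k : ℝ) (η : ℝ → E3 → ℝ) : Prop :=
  H1ContOn η ∧ (∀ s ∈ Set.Icc (0 : ℝ) 1, Sρ ρ (η s) ∧ Radial (η s)) ∧
    gradSq (η 0) ≤ k ∧ Phi a b μ q α (η 1) ≤ 0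

/-- The mountain-pass level `σ_ρ`. -/
def sigmaRho (a b μ ρ q α k : ℝ) : ℝ :=
  sInf {c : ℝ | ∃ η : ℝ → E3 → ℝ, InGamma a b μ ρ q α k η ∧
    c = sSup ((fun s => Phi a b μ q α (η s)) '' Set.Icc (0 : ℝ) 1)}

/-- The admissible paths `Γ̃_ρ` for the auxiliary functional. -/
def InGammaTilde (a b μ ρ q α k : ℝ) (η₁ : ℝ → E3 → ℝ) (η₂ : ℝ → ℝ) : Prop :=
  H1ContOn η₁ ∧ ContinuousOn η₂ (Set.Icc (0 : ℝ) 1) ∧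
    (∀ s ∈ Set.Icc (0 : ℝ) 1, Sρ ρ (η₁ s) ∧ Radial (η₁ s) ∧ 0 < η₂ s) ∧
    gradSq (η₁ 0) ≤ k ∧ η₂ 0 = 1 ∧ Phi a b μ q α (η₁ 1) ≤ 0 ∧ η₂ 1 = 1

/-- The auxiliary mountain-pass level `σ̃_ρ` for `Φ̃(u,t) = Φ(t ⋆ u)`. -/
def sigmaTilde (a b μ ρ q α k : ℝ) : ℝ :=
  sInf {c : ℝ | ∃ (η₁ : ℝ → E3 → ℝ) (η₂ : ℝ → ℝ), InGammaTilde a b μ ρ q α k η₁ η₂ ∧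
    c = sSup ((fun s => Phi a b μ q α (scale (η₂ s) (η₁ s))) '' Set.Icc (0 : ℝ) 1)}

/-- Membership in `D^{1,2}(ℝ³)`. -/
def MemD12 (u : E3 → ℝ) : Prop :=
  MemLp u 6 (volume : Measure E3) ∧ MemLp (gradient u) 2 (volume : Measure E3)

/-- The best constant `S_α` in the critical Hardy–Littlewood–Sobolev inequality. -/
def Salpha (α : ℝ) : ℝ :=
  sInf {c : ℝ | ∃ u : E3 → ℝ, MemD12 u ∧ ¬ (u =ᵐ[(volume : Measure E3)] 0) ∧
    c = gradSq u / (calA α u) ^ (1 / (α + 3))}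

/-! Subtracting `P(u)/(qγ_q)` from `Φ(u)` leaves the gradient terms with the coefficients
`1/2 − 1/(qγ_q)` and `1/4 − 1/(qγ_q)`, kills the `L^q` term, and leaves `𝒜(u)` with the
coefficient `1/(qγ_q) − 1/(2(α+3))`. Since `qγ_q = 3(q−2)/2` lies in `(4, 6)` for
`q ∈ (14/3, 6)` and `𝒜 ≥ 0`, on `𝒫` this gives the lower bound with positive coefficients,
and the linear term alone already forces coercivity. -/

lemma Aalpha_nonneg {α : ℝ} (hα₀ : 0 < α) (hα₃ : α < 3) : 0 ≤ Aalpha α := by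
  have hΓ₁ : 0 < Real.Gamma ((3 - α) / 2) := Real.Gamma_pos_of_pos (by linarith)
  have hΓ₂ : 0 < Real.Gamma (α / 2) := Real.Gamma_pos_of_pos (by linarith)
  unfold Aalpha
  positivity

lemma rieszConv_nonneg {α : ℝ} (hα₀ : 0 < α) (hα₃ : α < 3) (u : E3 → ℝ) (x : E3) :
    0 ≤ rieszConv α u x :=
  integral_nonneg fun y =>
    mul_nonneg (div_nonneg (Aalpha_nonneg hα₀ hα₃) (by positivity)) (by positivity)

lemma calA_nonneg {α : ℝ} (hα₀ : 0 < α) (hα₃ : α < 3) (u : E3 → ℝ) : 0 ≤ calA α u :=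
  integral_nonneg fun x => mul_nonneg (rieszConv_nonneg hα₀ hα₃ u x) (by positivity)

lemma gradSq_nonneg (u : E3 → ℝ) : 0 ≤ gradSq u :=
  integral_nonneg fun _ => by positivity

lemma mul_gammaq {q : ℝ} (hq : q ≠ 0) : q * gammaq q = 3 * (q - 2) / 2 := by
  unfold gammaq
  field_simp

lemma Phi_eq_Poh_div_add {a b μ q α : ℝ} (hγ : gammaq q ≠ 0) (u : E3 → ℝ) :
    Phi a b μ q α u = Poh a b μ q α u / (q * gammaq q)
      + a * (1 / 2 - 1 / (q * gammaq q)) * gradSq u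
      + b * (1 / 4 - 1 / (q * gammaq q)) * gradSq u ^ 2
      + (1 / (q * gammaq q) - 1 / (2 * (α + 3))) * calA α u := by
  unfold Phi Poh
  by_cases hq : q = 0
  · simp [hq, gammaq] at hγ
  field_simp
  ring

lemma Phi_ge_of_mem_PohSet {a b μ ρ q α : ℝ} (hq₀ : 0 < q) (hq₆ : q < 6)
    (hα₀ : 0 < α) (hα₃ : α < 3) (hγ : 0 < gammaq q) {u : E3 → ℝ}
    (hu : PohSet a b μ ρ q α u) :
    a * (1 / 2 - 1 / (q * gammaq q)) * gradSq u
      + b * (1 / 4 - 1 / (q * gammaq q)) * gradSq u ^ 2 ≤ Phi a b μ q α u := by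
  have hcoeff : 0 ≤ 1 / (q * gammaq q) - 1 / (2 * (α + 3)) := by
    have hQ : q * gammaq q ≤ 2 * (α + 3) := by rw [mul_gammaq hq₀.ne']; linarith
    exact sub_nonneg.2 (one_div_le_one_div_of_le (by positivity) hQ)
  rw [Phi_eq_Poh_div_add hγ.ne', hu.2, zero_div, zero_add]
  linarith [mul_nonneg hcoeff (calA_nonneg hα₀ hα₃ u)]

lemma one_div_mul_gammaq_lt_quarter {q : ℝ} (hq : 14 / 3 < q) :
    1 / (q * gammaq q) < 1 / 4 := by
  have hQ : 4 < q * gammaq q := by rw [mul_gammaq (by linarith)]; linarith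
  exact one_div_lt_one_div_of_lt (by norm_num) hQ

theorem coercivity_on_pohozaev_set_general
    (a b μ ρ q α : ℝ) (ha : 0 < a) (hb : 0 < b)
    (hq1 : 14 / 3 < q) (hq2 : q < 6) (hα1 : 0 < α) (hα2 : α < 3) :
    (∀ u : E3 → ℝ, PohSet a b μ ρ q α u →
      a * (1 / 2 - 1 / (q * gammaq q)) * gradSq u
        + b * (1 / 4 - 1 / (q * gammaq q)) * (gradSq u) ^ 2 ≤ Phi a b μ q α u) ∧
    (0 < 1 / 2 - 1 / (q * gammaq q) ∧ 0 < 1 / 4 - 1 / (q * gammaq q)) ∧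
    (∀ M : ℝ, ∃ R : ℝ, ∀ u : E3 → ℝ, PohSet a b μ ρ q α u → R ≤ gradSq u →
      M ≤ Phi a b μ q α u) := by
  have hq₀ : 0 < q := by linarith
  have hγ : 0 < gammaq q := by unfold gammaq; exact div_pos (by linarith) (by linarith)
  have hc₄ : 0 < 1 / 4 - 1 / (q * gammaq q) := by
    linarith [one_div_mul_gammaq_lt_quarter hq1]
  have hc₂ : 0 < 1 / 2 - 1 / (q * gammaq q) := by linarith
  have hlower := fun u (hu : PohSet a b μ ρ q α u) =>
    Phi_ge_of_mem_PohSet hq₀ hq2 hα1 hα2 hγ hu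
  refine ⟨hlower, ⟨hc₂, hc₄⟩, fun M => ⟨M / (a * (1 / 2 - 1 / (q * gammaq q))), ?_⟩⟩
  intro u hu hR
  have hlin : M ≤ a * (1 / 2 - 1 / (q * gammaq q)) * gradSq u :=
    (div_le_iff₀' (mul_pos ha hc₂)).1 hR
  have hquad : 0 ≤ b * (1 / 4 - 1 / (q * gammaq q)) * gradSq u ^ 2 := by positivity
  linarith [hlower u hu]

/-- For every `u ∈ 𝒫`,
`Φ(u) ≥ a(1/2 − 1/(qγ_q))|∇u|₂² + b(1/4 − 1/(qγ_q))|∇u|₂⁴`; both coefficients are strictly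
positive (since `qγ_q > 4`), and in particular `Φ` is coercive on `𝒫`. -/
theorem coercivity_on_pohozaev_set
    (a b μ ρ q α : ℝ) (ha : 0 < a) (hb : 0 < b) (hμ : 0 < μ) (hρ : 0 < ρ)
    (hq1 : 14 / 3 < q) (hq2 : q < 6) (hα1 : 0 < α) (hα2 : α < 3) :
    (∀ u : E3 → ℝ, PohSet a b μ ρ q α u →
      a * (1 / 2 - 1 / (q * gammaq q)) * gradSq u
        + b * (1 / 4 - 1 / (q * gammaq q)) * (gradSq u) ^ 2 ≤ Phi a b μ q α u) ∧
    (0 < 1 / 2 - 1 / (q * gammaq q) ∧ 0 < 1 / 4 - 1 / (q * gammaq q)) ∧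
    (∀ M : ℝ, ∃ R : ℝ, ∀ u : E3 → ℝ, PohSet a b μ ρ q α u → R ≤ gradSq u →
      M ≤ Phi a b μ q α u) :=
  coercivity_on_pohozaev_set_general a b μ ρ q α ha hb hq1 hq2 hα1 hα2

end KirchhoffChoquard
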